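/- Applicability is undecidable for procedures with tgd constraints: there exist two fixed procedures P_1 and P_2, whose pre- and postconditions are tgds, such that it is undecidable, given a finite instance I, whether every instance in outcomes_{P_1}(I) satisfies the precondition tgd of P_2. -/

import Mathlib

/-- Domain of values. -/
abbrev Val := ℕ
/-- Variables. -/
abbrev Var := ℕ
/-- Relation names. -/
abbrev RelName := ℕ
/-- A relational instance assigns a set of tuples to each relation name. -/
abbrev Instance := RelName → Set (List Val)

/-- Instance extension (inclusion). -/
def Instance.le (I J : Instance) : Prop := ∀ R, I R ⊆ J R

/-- A relational atom `R(x₁,…,xₖ)`. -/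
structure Atom where
  rel : RelName
  args : List Var

/-- Satisfaction of an atom under an assignment. -/
def holdsAtom (I : Instance) (ν : Var → Val) (a : Atom) : Prop :=
  a.args.map ν ∈ I a.rel

/-- A tuple-generating dependency, given by its body and head conjunctions. -/
structure TGD where
  body : List Atom
  head : List Atom

/-- Variables occurring in the body of a tgd. -/
def TGD.bodyVar (t : TGD) (v : Var) : Prop := ∃ a ∈ t.body, v ∈ a.args

/-- Satisfaction of a tgd: every assignment satisfying the body extends to one
satisfying the head. -/
def satTGD (I : Instance) (t : TGD) : Prop :=
  ∀ ν : Var → Val, (∀ a ∈ t.body, holdsAtom I ν a) →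
    ∃ ν' : Var → Val, (∀ v, t.bodyVar v → ν' v = ν v) ∧ ∀ a ∈ t.head, holdsAtom I ν' a

/-- A full tgd has no existential variables in its head. -/
def FullTGD (t : TGD) : Prop := ∀ a ∈ t.head, ∀ v ∈ a.args, t.bodyVar v

/-- A set of tgds is acyclic: the relation-dependency graph (edge from a body
relation to a head relation) has no cycle, witnessed by a rank function. -/
def AcyclicTGDs (ts : List TGD) : Prop :=
  ∃ rank : RelName → ℕ, ∀ t ∈ ts, ∀ a ∈ t.body, ∀ b ∈ t.head, rank a.rel < rank b.rel

/-- Finiteness of an instance (finitely many facts overall). -/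
def FiniteInst (I : Instance) : Prop := {p : RelName × List Val | p.2 ∈ I p.1}.Finite

/-- Relations appearing in heads of a set of tgds (the scope of a safe-scope procedure). -/
def headRels (ts : List TGD) : Set RelName := { R | ∃ t ∈ ts, ∃ b ∈ t.head, b.rel = R }

/-- Outcomes of applying a procedure with safe scope (identified with its set of
postcondition tgds): extensions of `I` satisfying the tgds, where all relations
outside the scope (the head relations) are unchanged. -/
def safeOutcomes (ts : List TGD) (I : Instance) : Set Instance :=
  { J | Instance.le I J ∧ (∀ t ∈ ts, satTGD J t) ∧ ∀ R, R ∉ headRels ts → I R = J R }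

/-- Outcomes of a sequence of procedures with safe scope. -/
def safeSeqOutcomes : List (List TGD) → Instance → Set Instance
  | [], I => {I}
  | Γ :: rest, I => ⋃ J ∈ safeOutcomes Γ I, safeSeqOutcomes rest J

/-- A boolean conjunctive query: a conjunction of atoms, all variables existential. -/
abbrev BCQ := List Atom

/-- Satisfaction of a boolean conjunctive query. -/
def holdsBCQ (I : Instance) (q : BCQ) : Prop :=
  ∃ ν : Var → Val, ∀ a ∈ q, holdsAtom I ν a

/-- The set of instances represented by a scoped knowledge base `(I, Γ, Scope)`. -/
def repSKB (I : Instance) (Γ : List TGD) (Scope : Set RelName) : Set Instance :=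
  { J | Instance.le I J ∧ (∀ t ∈ Γ, satTGD J t) ∧ ∀ R, R ∉ Scope → I R = J R }

/-- Minimal members of a set of instances. -/
def MinimalIn (S : Set Instance) (J : Instance) : Prop :=
  J ∈ S ∧ ∀ K ∈ S, Instance.le K J → K = J

/-- The set of facts of an instance. -/
def tupleSet (I : Instance) : Set (RelName × List Val) := {p | p.2 ∈ I p.1}

/-- Encoding of finite instances as lists of facts (for computability). -/
abbrev FinInst := List (RelName × List Val)

/-- The instance encoded by a list of facts. -/
def toInstance (L : FinInst) : Instance := fun R => { t | (R, t) ∈ L }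

/-- A conjunctive query with free variables. -/
structure CQuery where
  free : List Var
  body : List Atom

/-- Answers of a conjunctive query over an instance. -/
def answers (q : CQuery) (I : Instance) : Set (List Val) :=
  { l | ∃ ν : Var → Val, (∀ a ∈ q.body, holdsAtom I ν a) ∧ l = q.free.map ν }

/-- A procedure whose pre- and postconditions are tgds, with a scope and
preservation queries. -/
structure Proc where
  scope : Set RelName
  pre : List TGD
  post : List TGD
  pres : List CQuery

/-- Possible outcomes of applying a procedure: the preconditions hold on `I`,
the postconditions hold on the outcome, out-of-scope relations are unchanged
and answers to the preservation queries are preserved. -/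
def procOutcomes (P : Proc) (I : Instance) : Set Instance :=
  { J | (∀ t ∈ P.pre, satTGD I t) ∧ (∀ t ∈ P.post, satTGD J t) ∧
        (∀ R, R ∉ P.scope → I R = J R) ∧ ∀ q ∈ P.pres, answers q I ⊆ answers q J }

/-!
We reduce the halting problem for Mathlib's partial recursive codes (rather than the embedding
problem for finite semigroups). The postconditions of `P₁` are a fixed set of tgds which, from
a successor chain `0 → 1 → ⋯ → N` and a marker `Top(N)`, generate the natural numbers (with one
existential tgd), their order, addition, multiplication and Cantor pairing, and then the graph of
the step-bounded interpreter `evaln`; a last rule derives the nullary fact `H()` once code `N`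
has an evaluation on input `0`. `P₁` may change every relation but has to preserve the input
facts, and the precondition of `P₂` is `H()`.

If code `N` halts, every outcome `J` contains `H()`: pulling `J` back along a successor chain in
`J` that starts with the input numerals yields an instance over `ℕ` in which the rules must have
fired along the whole computation. If it does not halt, the intended model over `ℕ`, with `H`
empty, is an outcome.
-/

theorem satTGD_of_forall {I : Instance} {t : TGD}
    (h : ∀ ν : Var → Val, t.body.Forall (holdsAtom I ν) → t.head.Forall (holdsAtom I ν)) :
    satTGD I t := fun ν hb =>
  ⟨ν, fun _ _ => rfl, List.forall_iff_forall_mem.1 (h ν (List.forall_iff_forall_mem.2 hb))⟩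

theorem FullTGD.head_forall {I : Instance} {t : TGD} (ht : FullTGD t) (hI : satTGD I t)
    {ν : Var → Val} (hb : t.body.Forall (holdsAtom I ν)) : t.head.Forall (holdsAtom I ν) := by
  obtain ⟨ν', hν', hhead⟩ := hI ν (List.forall_iff_forall_mem.1 hb)
  refine List.forall_iff_forall_mem.2 fun a ha => ?_
  have : a.args.map ν' = a.args.map ν := List.map_congr_left fun v hv => hν' v (ht a ha v hv)
  simpa only [holdsAtom, this] using hhead a ha

instance (t : TGD) : Decidable (FullTGD t) := by
  unfold FullTGD TGD.bodyVar; infer_instance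

def Instance.comap (x : Val → Val) (J : Instance) : Instance := fun R => {l | l.map x ∈ J R}

theorem holdsAtom_comap {J : Instance} {x : Val → Val} {ν : Var → Val} {a : Atom} :
    holdsAtom (J.comap x) ν a ↔ holdsAtom J (x ∘ ν) a := by
  simp only [holdsAtom, Instance.comap, Set.mem_ofPred_eq, List.map_map]

theorem FullTGD.satTGD_comap {J : Instance} {t : TGD} (ht : FullTGD t) (hJ : satTGD J t)
    (x : Val → Val) : satTGD (J.comap x) t := by
  refine satTGD_of_forall fun ν hb => ?_
  simp only [List.forall_iff_forall_mem, holdsAtom_comap] at hb ⊢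
  exact List.forall_iff_forall_mem.1 (ht.head_forall hJ (List.forall_iff_forall_mem.2 hb))

theorem satTGD_nullary_iff {J : Instance} {R : RelName} :
    satTGD J ⟨[], [⟨R, []⟩]⟩ ↔ [] ∈ J R := by
  simp [satTGD, holdsAtom, TGD.bodyVar]

theorem answers_mono {I J : Instance} (h : Instance.le I J) (q : CQuery) :
    answers q I ⊆ answers q J := fun _ ⟨ν, hν, hl⟩ => ⟨ν, fun a ha => h _ (hν a ha), hl⟩

def atomQuery (R : RelName) (n : ℕ) : CQuery := ⟨List.range n, [⟨R, List.range n⟩]⟩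

theorem mem_answers_atomQuery {I : Instance} {R : RelName} {n : ℕ} {l : List Val} :
    l ∈ answers (atomQuery R n) I ↔ l ∈ I R ∧ l.length = n := by
  simp only [answers, atomQuery, List.mem_singleton, forall_eq, holdsAtom, Set.mem_ofPred_eq]
  constructor
  · rintro ⟨ν, hν, rfl⟩
    exact ⟨hν, by simp⟩
  · rintro ⟨hl, rfl⟩
    have : (List.range l.length).map (fun i => l.getD i 0) = l :=
      List.ext_getElem (by simp) fun i _ hi => by simp [List.getElem?_eq_getElem hi]
    exact ⟨_, by rwa [this], this.symm⟩

theorem exists_chain_extending {α : Type*} {p : α → Prop} {r : α → α → Prop}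
    (hstep : ∀ a, p a → ∃ b, r a b ∧ p b) (f : ℕ → α) (N : ℕ) (hN : p (f N))
    (hf : ∀ i < N, r (f i) (f (i + 1))) :
    ∃ x : ℕ → α, (∀ i ≤ N, x i = f i) ∧ ∀ i, r (x i) (x (i + 1)) := by
  choose next hnext using hstep
  let g : Subtype p → Subtype p := fun a => ⟨next a a.2, (hnext a a.2).2⟩
  refine ⟨fun i => if i < N then f i else (g^[i - N] ⟨f N, hN⟩).1, fun i hi => ?_, fun i => ?_⟩
  · rcases hi.lt_or_eq with hi | rfl <;> simp [*]
  · rcases lt_trichotomy (i + 1) N with hi | hi | hi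
    · simpa [hi, (Nat.lt_succ_self i).trans hi] using hf i (by omega)
    · simpa [hi, show i < N by omega] using hf i (by omega)
    · simp only [show ¬ i < N by omega, show ¬ i + 1 < N by omega, if_false,
        show i + 1 - N = (i - N) + 1 by omega, Function.iterate_succ_apply']
      exact (hnext _ _).1

namespace Nat.Partrec.Code

open Encodable Denumerable

theorem evaln_succ_zero_iff {k n m : ℕ} :
    evaln (k + 1) zero n = some m ↔ n ≤ k ∧ m = 0 := by
  simp [evaln, Option.bind_eq_some_iff, Option.guard_eq_some', eq_comm (a := m)]

theorem evaln_succ_succ_iff {k n m : ℕ} :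
    evaln (k + 1) succ n = some m ↔ n ≤ k ∧ m = n + 1 := by
  simp [evaln, Option.bind_eq_some_iff, Option.guard_eq_some', eq_comm (a := m)]

theorem evaln_succ_left_iff {k n m : ℕ} :
    evaln (k + 1) left n = some m ↔ n ≤ k ∧ m = n.unpair.1 := by
  simp [evaln, Option.bind_eq_some_iff, Option.guard_eq_some', eq_comm (a := m)]

theorem evaln_succ_right_iff {k n m : ℕ} :
    evaln (k + 1) right n = some m ↔ n ≤ k ∧ m = n.unpair.2 := by
  simp [evaln, Option.bind_eq_some_iff, Option.guard_eq_some', eq_comm (a := m)]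

theorem evaln_succ_pair_iff {k n m : ℕ} {cf cg : Code} :
    evaln (k + 1) (pair cf cg) n = some m ↔ n ≤ k ∧
      ∃ a b, evaln (k + 1) cf n = some a ∧ evaln (k + 1) cg n = some b ∧ m = Nat.pair a b := by
  simp [evaln, Option.bind_eq_some_iff, Option.guard_eq_some', Seq.seq, eq_comm (a := m)]

theorem evaln_succ_comp_iff {k n m : ℕ} {cf cg : Code} :
    evaln (k + 1) (comp cf cg) n = some m ↔ n ≤ k ∧
      ∃ a, evaln (k + 1) cg n = some a ∧ evaln (k + 1) cf a = some m := by
  simp [evaln, Option.bind_eq_some_iff, Option.guard_eq_some']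

theorem evaln_succ_prec_iff {k n m : ℕ} {cf cg : Code} :
    evaln (k + 1) (prec cf cg) n = some m ↔ n ≤ k ∧
      ((n.unpair.2 = 0 ∧ evaln (k + 1) cf n.unpair.1 = some m) ∨
        ∃ y i, n.unpair.2 = y + 1 ∧ evaln k (prec cf cg) (Nat.pair n.unpair.1 y) = some i ∧
          evaln (k + 1) cg (Nat.pair n.unpair.1 (Nat.pair y i)) = some m) := by
  rcases hn : n.unpair.2 with _ | y <;>
    simp [evaln, Option.bind_eq_some_iff, Option.guard_eq_some', Nat.unpaired, hn]

theorem evaln_succ_rfind'_iff {k n m : ℕ} {cf : Code} :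
    evaln (k + 1) (rfind' cf) n = some m ↔ n ≤ k ∧ ∃ v, evaln (k + 1) cf n = some v ∧
      ((v = 0 ∧ m = n.unpair.2) ∨
        (v ≠ 0 ∧ evaln k (rfind' cf) (Nat.pair n.unpair.1 (n.unpair.2 + 1)) = some m)) := by
  simp [evaln, Option.bind_eq_some_iff, Option.guard_eq_some', Nat.unpaired, ite_eq_iff,
    eq_comm (a := m)]

theorem encode_pair_eq (cf cg : Code) :
    encode (pair cf cg) = 4 * Nat.pair (encode cf) (encode cg) + 4 := by
  simp only [encodeCode_eq, encodeCode]; omega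

theorem encode_prec_eq (cf cg : Code) :
    encode (prec cf cg) = 4 * Nat.pair (encode cf) (encode cg) + 5 := by
  simp only [encodeCode_eq, encodeCode]; omega

theorem encode_comp_eq (cf cg : Code) :
    encode (comp cf cg) = 4 * Nat.pair (encode cf) (encode cg) + 6 := by
  simp only [encodeCode_eq, encodeCode]; omega

theorem encode_rfind'_eq (cf : Code) : encode (rfind' cf) = 4 * encode cf + 7 := by
  simp only [encodeCode_eq, encodeCode]; omega

theorem ofNat_zero_eq : ofNat Code 0 = zero := ofNat_encode zero

theorem ofNat_one_eq : ofNat Code 1 = succ := ofNat_encode succ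

theorem ofNat_two_eq : ofNat Code 2 = left := ofNat_encode left

theorem ofNat_three_eq : ofNat Code 3 = right := ofNat_encode right

theorem ofNat_eq_pair (f g : ℕ) :
    ofNat Code (4 * Nat.pair f g + 4) = pair (ofNat Code f) (ofNat Code g) :=
  encode_injective <| by rw [encode_ofNat, encode_pair_eq, encode_ofNat, encode_ofNat]

theorem ofNat_eq_prec (f g : ℕ) :
    ofNat Code (4 * Nat.pair f g + 5) = prec (ofNat Code f) (ofNat Code g) :=
  encode_injective <| by rw [encode_ofNat, encode_prec_eq, encode_ofNat, encode_ofNat]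

theorem ofNat_eq_comp (f g : ℕ) :
    ofNat Code (4 * Nat.pair f g + 6) = comp (ofNat Code f) (ofNat Code g) :=
  encode_injective <| by rw [encode_ofNat, encode_comp_eq, encode_ofNat, encode_ofNat]

theorem ofNat_eq_rfind' (f : ℕ) : ofNat Code (4 * f + 7) = rfind' (ofNat Code f) :=
  encode_injective <| by rw [encode_ofNat, encode_rfind'_eq, encode_ofNat]

end Nat.Partrec.Code

namespace HaltingReduction

open Nat.Partrec Code Encodable Denumerable

/- Relation symbols: 0 `Z`, 1 `S`, 2 `Nat`, 3 `≤`, 4 `+`, 5 `*`, 6 `Nat.pair`, 7 `Quad`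
(`e = 4 q + 4`), 8 `E` (graph of `evaln`), 9 `Top`, 10 `H`; see `stdModel`. -/

def zeroNat : TGD := ⟨[⟨0, [0]⟩], [⟨2, [0]⟩]⟩
def succNat : TGD := ⟨[⟨1, [0, 1]⟩], [⟨2, [1]⟩]⟩
def succExists : TGD := ⟨[⟨2, [0]⟩], [⟨1, [0, 1]⟩, ⟨2, [1]⟩]⟩
def leRefl : TGD := ⟨[⟨2, [0]⟩], [⟨3, [0, 0]⟩]⟩
def leSucc : TGD := ⟨[⟨3, [0, 1]⟩, ⟨1, [1, 2]⟩], [⟨3, [0, 2]⟩]⟩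
def addZero : TGD := ⟨[⟨2, [0]⟩, ⟨0, [1]⟩], [⟨4, [0, 1, 0]⟩]⟩
def addSucc : TGD := ⟨[⟨4, [0, 1, 2]⟩, ⟨1, [1, 3]⟩, ⟨1, [2, 4]⟩], [⟨4, [0, 3, 4]⟩]⟩
def mulZero : TGD := ⟨[⟨2, [0]⟩, ⟨0, [1]⟩], [⟨5, [0, 1, 1]⟩]⟩
def mulSucc : TGD := ⟨[⟨5, [0, 1, 2]⟩, ⟨1, [1, 3]⟩, ⟨4, [2, 0, 4]⟩], [⟨5, [0, 3, 4]⟩]⟩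
def pairLt : TGD :=
  ⟨[⟨1, [0, 2]⟩, ⟨3, [2, 1]⟩, ⟨5, [1, 1, 3]⟩, ⟨4, [3, 0, 4]⟩], [⟨6, [0, 1, 4]⟩]⟩
def pairGe : TGD :=
  ⟨[⟨3, [1, 0]⟩, ⟨5, [0, 0, 2]⟩, ⟨4, [2, 0, 3]⟩, ⟨4, [3, 1, 4]⟩], [⟨6, [0, 1, 4]⟩]⟩
def quad : TGD :=
  ⟨[⟨4, [0, 0, 1]⟩, ⟨4, [1, 1, 2]⟩, ⟨1, [2, 3]⟩, ⟨1, [3, 4]⟩, ⟨1, [4, 5]⟩, ⟨1, [5, 6]⟩],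
    [⟨7, [0, 6]⟩]⟩

/- Variables 0–4 stand for `k`, `k + 1`, `n`, `e`, `m`: the rule derives `E(k + 1, e, n, m)`
under the guard `n ≤ k` of `evaln (k + 1)`. The code number `e` is recognised arithmetically:
`zero`, `succ`, `left`, `right` are `0, 1, 2, 3`, and `pair`, `prec`, `comp`, `rfind'` are
`4 p + 4, 4 p + 5, 4 p + 6, 4 f + 7`. -/
def evalRule (body : List Atom) : TGD :=
  ⟨⟨1, [0, 1]⟩ :: ⟨3, [2, 0]⟩ :: body, [⟨8, [1, 3, 2, 4]⟩]⟩

def evalZero : TGD := evalRule [⟨0, [3]⟩, ⟨0, [4]⟩]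
def evalSucc : TGD := evalRule [⟨0, [5]⟩, ⟨1, [5, 3]⟩, ⟨1, [2, 4]⟩]
def evalLeft : TGD := evalRule [⟨0, [5]⟩, ⟨1, [5, 6]⟩, ⟨1, [6, 3]⟩, ⟨6, [4, 7, 2]⟩]
def evalRight : TGD :=
  evalRule [⟨0, [5]⟩, ⟨1, [5, 6]⟩, ⟨1, [6, 7]⟩, ⟨1, [7, 3]⟩, ⟨6, [8, 4, 2]⟩]
def evalPair : TGD :=
  evalRule [⟨7, [5, 3]⟩, ⟨6, [6, 7, 5]⟩, ⟨8, [1, 6, 2, 8]⟩, ⟨8, [1, 7, 2, 9]⟩, ⟨6, [8, 9, 4]⟩]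
def evalComp : TGD :=
  evalRule [⟨7, [5, 10]⟩, ⟨1, [10, 11]⟩, ⟨1, [11, 3]⟩, ⟨6, [6, 7, 5]⟩, ⟨8, [1, 7, 2, 8]⟩,
    ⟨8, [1, 6, 8, 4]⟩]
def evalPrecZero : TGD :=
  evalRule [⟨7, [5, 10]⟩, ⟨1, [10, 3]⟩, ⟨6, [6, 7, 5]⟩, ⟨0, [8]⟩, ⟨6, [9, 8, 2]⟩,
    ⟨8, [1, 6, 9, 4]⟩]
def evalPrecSucc : TGD :=
  evalRule [⟨7, [5, 10]⟩, ⟨1, [10, 3]⟩, ⟨6, [6, 7, 5]⟩, ⟨1, [8, 11]⟩, ⟨6, [9, 11, 2]⟩,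
    ⟨6, [9, 8, 12]⟩, ⟨8, [0, 3, 12, 13]⟩, ⟨6, [8, 13, 14]⟩, ⟨6, [9, 14, 15]⟩,
    ⟨8, [1, 7, 15, 4]⟩]
def evalRfindZero : TGD :=
  evalRule [⟨7, [6, 10]⟩, ⟨1, [10, 11]⟩, ⟨1, [11, 12]⟩, ⟨1, [12, 3]⟩, ⟨0, [8]⟩,
    ⟨8, [1, 6, 2, 8]⟩, ⟨6, [9, 4, 2]⟩]
def evalRfindSucc : TGD :=
  evalRule [⟨7, [6, 10]⟩, ⟨1, [10, 11]⟩, ⟨1, [11, 12]⟩, ⟨1, [12, 3]⟩, ⟨1, [7, 8]⟩,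
    ⟨8, [1, 6, 2, 8]⟩, ⟨6, [9, 5, 2]⟩, ⟨1, [5, 13]⟩, ⟨6, [9, 13, 14]⟩, ⟨8, [0, 3, 14, 4]⟩]
def halt : TGD := ⟨[⟨9, [0]⟩, ⟨0, [1]⟩, ⟨8, [2, 0, 1, 3]⟩], [⟨10, []⟩]⟩

def arithRules : List TGD :=
  [zeroNat, succNat, leRefl, leSucc, addZero, addSucc, mulZero, mulSucc, pairLt, pairGe, quad]

def evalRules : List TGD :=
  [evalZero, evalSucc, evalLeft, evalRight, evalPair, evalComp, evalPrecZero, evalPrecSucc,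
    evalRfindZero, evalRfindSucc]

def fullRules : List TGD := arithRules ++ evalRules ++ [halt]

theorem fullTGD_of_mem_fullRules : ∀ t ∈ fullRules, FullTGD t := by decide

def P₁ : Proc :=
  ⟨Set.univ, [], succExists :: fullRules, [atomQuery 0 1, atomQuery 1 2, atomQuery 9 1]⟩

def P₂ : Proc := ⟨∅, [⟨[], [⟨10, []⟩]⟩], [], []⟩

def input (N : ℕ) : FinInst :=
  (0, [0]) :: (9, [N]) :: (List.range N).map fun i => (1, [i, i + 1])

theorem input_primrec : Primrec input := by
  have hsucc : Primrec fun i : ℕ => ((1 : ℕ), [i, i + 1]) :=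
    (Primrec.const 1).pair (Primrec.list_cons.comp Primrec.id
      (Primrec.list_cons.comp Primrec.succ (Primrec.const [])))
  have htop : Primrec fun N : ℕ => ((9 : ℕ), [N]) :=
    (Primrec.const 9).pair (Primrec.list_cons.comp Primrec.id (Primrec.const []))
  exact Primrec.list_cons.comp (Primrec.const _) (Primrec.list_cons.comp htop
    (Primrec.list_map Primrec.list_range (hsucc.comp Primrec.snd)))

def stdModel (N : ℕ) (R : RelName) : Set (List Val) :=
  {l | match R, l with
    | 0, [a] => a = 0
    | 1, [a, b] => b = a + 1
    | 2, [_] => True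
    | 3, [a, b] => a ≤ b
    | 4, [a, b, c] => c = a + b
    | 5, [a, b, c] => c = a * b
    | 6, [a, b, c] => c = Nat.pair a b
    | 7, [a, b] => b = 4 * a + 4
    | 8, [k, e, n, m] => evaln k (ofNat Code e) n = some m
    | 9, [a] => a = N
    | _, _ => False}

theorem input_le_stdModel (N : ℕ) : Instance.le (toInstance (input N)) (stdModel N) := by
  intro R l hl
  simp only [toInstance, input, Set.mem_ofPred_eq, List.mem_cons, Prod.mk.injEq, List.mem_map,
    List.mem_range] at hl
  rcases hl with ⟨rfl, rfl⟩ | ⟨rfl, rfl⟩ | ⟨i, -, rfl, rfl⟩ <;> simp [stdModel]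

theorem stdModel_sat_succExists (N : ℕ) : satTGD (stdModel N) succExists := fun ν _ => by
  refine ⟨Function.update ν 1 (ν 0 + 1), fun v ⟨a, ha, hv⟩ => ?_, ?_⟩
  · simp only [succExists, List.mem_singleton] at ha
    subst ha
    simp_all
  · simp [succExists, holdsAtom, stdModel]

theorem stdModel_sat_arithRules (N : ℕ) : ∀ t ∈ arithRules, satTGD (stdModel N) t := by
  simp only [arithRules, List.forall_mem_cons, List.not_mem_nil, IsEmpty.forall_iff,
    implies_true, and_true]
  and_intros <;> refine satTGD_of_forall fun ν hb => ?_ <;>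
    simp only [zeroNat, succNat, leRefl, leSucc, addZero, addSucc, mulZero, mulSucc, pairLt,
      pairGe, quad, List.Forall, holdsAtom, List.map, stdModel, Set.mem_ofPred_eq] at hb ⊢
  all_goals grind [Nat.pair]

theorem stdModel_sat_evalRules (N : ℕ) : ∀ t ∈ evalRules, satTGD (stdModel N) t := by
  simp only [evalRules, List.forall_mem_cons, List.not_mem_nil, IsEmpty.forall_iff,
    implies_true, and_true]
  and_intros <;> refine satTGD_of_forall fun ν hb => ?_ <;>
    simp only [evalZero, evalSucc, evalLeft, evalRight, evalPair, evalComp, evalPrecZero,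
      evalPrecSucc, evalRfindZero, evalRfindSucc, evalRule, List.Forall, holdsAtom,
      List.map, stdModel, Set.mem_ofPred_eq] at hb ⊢
  all_goals grind [evaln_succ_zero_iff, evaln_succ_succ_iff, evaln_succ_left_iff,
    evaln_succ_right_iff, evaln_succ_pair_iff, evaln_succ_comp_iff, evaln_succ_prec_iff,
    evaln_succ_rfind'_iff, ofNat_eq_pair, ofNat_eq_comp, ofNat_eq_prec, ofNat_eq_rfind',
    ofNat_zero_eq, ofNat_one_eq, ofNat_two_eq, ofNat_three_eq, Nat.unpair_pair]

theorem stdModel_sat_halt {N : ℕ} (hN : ¬ (eval (ofNat Code N) 0).Dom) :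
    satTGD (stdModel N) halt := by
  refine satTGD_of_forall fun ν hb => ?_
  simp only [halt, List.Forall, holdsAtom, List.map, stdModel, Set.mem_ofPred_eq] at hb
  obtain ⟨rfl, h0, h⟩ := hb
  rw [h0] at h
  exact hN (Part.dom_iff_mem.2 ⟨_, evaln_sound h⟩)

theorem stdModel_sat_post {N : ℕ} (hN : ¬ (eval (ofNat Code N) 0).Dom) :
    ∀ t ∈ P₁.post, satTGD (stdModel N) t := by
  intro t ht
  simp only [P₁, fullRules, List.mem_cons, List.mem_append, List.not_mem_nil, or_false] at ht
  rcases ht with rfl | (ht | ht) | rfl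
  exacts [stdModel_sat_succExists N, stdModel_sat_arithRules N t ht,
    stdModel_sat_evalRules N t ht, stdModel_sat_halt hN]

def listValuation (l : List Val) : Var → Val := fun v => l.getD v 0

/- For a concrete rule and `ν = listValuation l`, `t.body.Forall (holdsAtom K ν)` unfolds
definitionally to a conjunction of facts `[…] ∈ K R`, so `hb` can be an anonymous tuple. -/
theorem fire {K : Instance} (hK : ∀ t ∈ fullRules, satTGD K t) (t : TGD) (ν : Var → Val)
    (hb : t.body.Forall (holdsAtom K ν))
    (ht : t ∈ fullRules := by simp [fullRules, arithRules, evalRules]) :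
    t.head.Forall (holdsAtom K ν) :=
  (fullTGD_of_mem_fullRules t ht).head_forall (hK t ht) hb

structure ArithModel (K : Instance) : Prop where
  sat : ∀ t ∈ fullRules, satTGD K t
  zero : [0] ∈ K 0
  succ : ∀ a, [a, a + 1] ∈ K 1

namespace ArithModel

variable {K : Instance} (hK : ArithModel K)
include hK

theorem nat_mem (a : ℕ) : [a] ∈ K 2 := by
  induction a with
  | zero => exact fire hK.sat zeroNat (listValuation [0]) hK.zero
  | succ a _ => exact fire hK.sat succNat (listValuation [a, a + 1]) (hK.succ a)

theorem le_mem {a b : ℕ} (h : a ≤ b) : [a, b] ∈ K 3 := by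
  induction b, h using Nat.le_induction with
  | base => exact fire hK.sat leRefl (listValuation [a]) (hK.nat_mem a)
  | succ b _ ih => exact fire hK.sat leSucc (listValuation [a, b, b + 1]) ⟨ih, hK.succ b⟩

theorem add_mem (a b : ℕ) : [a, b, a + b] ∈ K 4 := by
  induction b with
  | zero => exact fire hK.sat addZero (listValuation [a, 0]) ⟨hK.nat_mem a, hK.zero⟩
  | succ b ih =>
    exact fire hK.sat addSucc (listValuation [a, b, a + b, b + 1, a + b + 1])
      ⟨ih, hK.succ b, hK.succ (a + b)⟩

theorem mul_mem (a b : ℕ) : [a, b, a * b] ∈ K 5 := by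
  induction b with
  | zero => exact fire hK.sat mulZero (listValuation [a, 0]) ⟨hK.nat_mem a, hK.zero⟩
  | succ b ih =>
    exact fire hK.sat mulSucc (listValuation [a, b, a * b, b + 1, a * b + a])
      ⟨ih, hK.succ b, hK.add_mem (a * b) a⟩

theorem pair_mem (a b : ℕ) : [a, b, Nat.pair a b] ∈ K 6 := by
  unfold Nat.pair
  split_ifs with h
  · exact fire hK.sat pairLt (listValuation [a, b, a + 1, b * b, b * b + a])
      ⟨hK.succ a, hK.le_mem h, hK.mul_mem b b, hK.add_mem (b * b) a⟩
  · exact fire hK.sat pairGe (listValuation [a, b, a * a, a * a + a, a * a + a + b])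
      ⟨hK.le_mem (not_lt.1 h), hK.mul_mem a a, hK.add_mem (a * a) a, hK.add_mem (a * a + a) b⟩

theorem unpair_mem (n : ℕ) : [n.unpair.1, n.unpair.2, n] ∈ K 6 := by
  simpa only [Nat.pair_unpair] using hK.pair_mem n.unpair.1 n.unpair.2

theorem quad_mem (q : ℕ) : [q, 4 * q + 4] ∈ K 7 := by
  have h : [q, q + q + (q + q) + 1 + 1 + 1 + 1] ∈ K 7 := fire hK.sat quad
    (listValuation [q, q + q, q + q + (q + q), q + q + (q + q) + 1, q + q + (q + q) + 1 + 1,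
      q + q + (q + q) + 1 + 1 + 1, q + q + (q + q) + 1 + 1 + 1 + 1])
    ⟨hK.add_mem q q, hK.add_mem _ _, hK.succ _, hK.succ _, hK.succ _, hK.succ _⟩
  rwa [show q + q + (q + q) + 1 + 1 + 1 + 1 = 4 * q + 4 by ring] at h

variable {k n m : ℕ} {cf cg : Code}

theorem eval_zero_mem (hn : n ≤ k) : [k + 1, encode Code.zero, n, 0] ∈ K 8 :=
  fire hK.sat evalZero (listValuation [k, k + 1, n, 0, 0])
    ⟨hK.succ k, hK.le_mem hn, hK.zero, hK.zero⟩

theorem eval_succ_mem (hn : n ≤ k) : [k + 1, encode Code.succ, n, n + 1] ∈ K 8 :=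
  fire hK.sat evalSucc (listValuation [k, k + 1, n, 1, n + 1, 0])
    ⟨hK.succ k, hK.le_mem hn, hK.zero, hK.succ 0, hK.succ n⟩

theorem eval_left_mem (hn : n ≤ k) : [k + 1, encode left, n, n.unpair.1] ∈ K 8 :=
  fire hK.sat evalLeft (listValuation [k, k + 1, n, 2, n.unpair.1, 0, 1, n.unpair.2])
    ⟨hK.succ k, hK.le_mem hn, hK.zero, hK.succ 0, hK.succ 1, hK.unpair_mem n⟩

theorem eval_right_mem (hn : n ≤ k) : [k + 1, encode right, n, n.unpair.2] ∈ K 8 :=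
  fire hK.sat evalRight (listValuation [k, k + 1, n, 3, n.unpair.2, 0, 1, 2, n.unpair.1])
    ⟨hK.succ k, hK.le_mem hn, hK.zero, hK.succ 0, hK.succ 1, hK.succ 2, hK.unpair_mem n⟩

theorem eval_pair_mem {a b : ℕ} (hn : n ≤ k) (ha : [k + 1, encode cf, n, a] ∈ K 8)
    (hb : [k + 1, encode cg, n, b] ∈ K 8) :
    [k + 1, encode (pair cf cg), n, Nat.pair a b] ∈ K 8 := by
  set p := Nat.pair (encode cf) (encode cg)
  rw [encode_pair_eq]
  exact fire hK.sat evalPair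
    (listValuation [k, k + 1, n, 4 * p + 4, Nat.pair a b, p, encode cf, encode cg, a, b])
    ⟨hK.succ k, hK.le_mem hn, hK.quad_mem p, hK.pair_mem _ _, ha, hb, hK.pair_mem a b⟩

theorem eval_comp_mem {a : ℕ} (hn : n ≤ k) (ha : [k + 1, encode cg, n, a] ∈ K 8)
    (hm : [k + 1, encode cf, a, m] ∈ K 8) : [k + 1, encode (comp cf cg), n, m] ∈ K 8 := by
  set p := Nat.pair (encode cf) (encode cg)
  rw [encode_comp_eq]
  exact fire hK.sat evalComp (listValuation [k, k + 1, n, 4 * p + 4 + 1 + 1, m, p, encode cf,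
      encode cg, a, 0, 4 * p + 4, 4 * p + 4 + 1])
    ⟨hK.succ k, hK.le_mem hn, hK.quad_mem p, hK.succ _, hK.succ _, hK.pair_mem _ _, ha, hm⟩

theorem eval_prec_zero_mem (hn : n ≤ k) (hy : n.unpair.2 = 0)
    (hm : [k + 1, encode cf, n.unpair.1, m] ∈ K 8) :
    [k + 1, encode (prec cf cg), n, m] ∈ K 8 := by
  set p := Nat.pair (encode cf) (encode cg)
  have hx := hK.unpair_mem n
  rw [hy] at hx
  rw [encode_prec_eq]
  exact fire hK.sat evalPrecZero (listValuation [k, k + 1, n, 4 * p + 4 + 1, m, p, encode cf,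
      encode cg, 0, n.unpair.1, 4 * p + 4])
    ⟨hK.succ k, hK.le_mem hn, hK.quad_mem p, hK.succ _, hK.pair_mem _ _, hK.zero, hx, hm⟩

theorem eval_prec_succ_mem {y i : ℕ} (hn : n ≤ k) (hy : n.unpair.2 = y + 1)
    (hi : [k, encode (prec cf cg), Nat.pair n.unpair.1 y, i] ∈ K 8)
    (hm : [k + 1, encode cg, Nat.pair n.unpair.1 (Nat.pair y i), m] ∈ K 8) :
    [k + 1, encode (prec cf cg), n, m] ∈ K 8 := by
  set p := Nat.pair (encode cf) (encode cg)
  have hx := hK.unpair_mem n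
  rw [hy] at hx
  rw [encode_prec_eq] at hi ⊢
  exact fire hK.sat evalPrecSucc (listValuation [k, k + 1, n, 4 * p + 4 + 1, m, p, encode cf,
      encode cg, y, n.unpair.1, 4 * p + 4, y + 1, Nat.pair n.unpair.1 y, i, Nat.pair y i,
      Nat.pair n.unpair.1 (Nat.pair y i)])
    ⟨hK.succ k, hK.le_mem hn, hK.quad_mem p, hK.succ _, hK.pair_mem _ _, hK.succ y, hx,
      hK.pair_mem _ _, hi, hK.pair_mem _ _, hK.pair_mem _ _, hm⟩

theorem eval_rfind_zero_mem (hn : n ≤ k) (h0 : [k + 1, encode cf, n, 0] ∈ K 8) :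
    [k + 1, encode (rfind' cf), n, n.unpair.2] ∈ K 8 := by
  set f := encode cf
  rw [encode_rfind'_eq]
  exact fire hK.sat evalRfindZero (listValuation [k, k + 1, n, 4 * f + 4 + 1 + 1 + 1,
      n.unpair.2, 0, f, 0, 0, n.unpair.1, 4 * f + 4, 4 * f + 4 + 1, 4 * f + 4 + 1 + 1])
    ⟨hK.succ k, hK.le_mem hn, hK.quad_mem f, hK.succ _, hK.succ _, hK.succ _, hK.zero, h0,
      hK.unpair_mem n⟩

theorem eval_rfind_succ_mem {v : ℕ} (hn : n ≤ k) (hv : [k + 1, encode cf, n, v + 1] ∈ K 8)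
    (hm : [k, encode (rfind' cf), Nat.pair n.unpair.1 (n.unpair.2 + 1), m] ∈ K 8) :
    [k + 1, encode (rfind' cf), n, m] ∈ K 8 := by
  set f := encode cf
  rw [encode_rfind'_eq] at hm ⊢
  exact fire hK.sat evalRfindSucc (listValuation [k, k + 1, n, 4 * f + 4 + 1 + 1 + 1, m,
      n.unpair.2, f, v, v + 1, n.unpair.1, 4 * f + 4, 4 * f + 4 + 1, 4 * f + 4 + 1 + 1,
      n.unpair.2 + 1, Nat.pair n.unpair.1 (n.unpair.2 + 1)])
    ⟨hK.succ k, hK.le_mem hn, hK.quad_mem f, hK.succ _, hK.succ _, hK.succ _, hK.succ v, hv,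
      hK.unpair_mem n, hK.succ _, hK.pair_mem _ _, hm⟩

theorem evaln_mem : ∀ {k : ℕ} {c : Code} {n m : ℕ}, evaln k c n = some m →
    [k, encode c, n, m] ∈ K 8
  | 0, _, _, _, h => by simp [evaln] at h
  | k + 1, c, n, m, h => by
    induction c generalizing n m with
    | zero =>
      obtain ⟨hn, rfl⟩ := evaln_succ_zero_iff.1 h
      exact hK.eval_zero_mem hn
    | succ =>
      obtain ⟨hn, rfl⟩ := evaln_succ_succ_iff.1 h
      exact hK.eval_succ_mem hn
    | left =>
      obtain ⟨hn, rfl⟩ := evaln_succ_left_iff.1 h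
      exact hK.eval_left_mem hn
    | right =>
      obtain ⟨hn, rfl⟩ := evaln_succ_right_iff.1 h
      exact hK.eval_right_mem hn
    | pair cf cg ihf ihg =>
      obtain ⟨hn, a, b, ha, hb, rfl⟩ := evaln_succ_pair_iff.1 h
      exact hK.eval_pair_mem hn (ihf _ _ ha) (ihg _ _ hb)
    | comp cf cg ihf ihg =>
      obtain ⟨hn, a, ha, hm⟩ := evaln_succ_comp_iff.1 h
      exact hK.eval_comp_mem hn (ihg _ _ ha) (ihf _ _ hm)
    | prec cf cg ihf ihg =>
      obtain ⟨hn, ⟨hy, hm⟩ | ⟨y, i, hy, hi, hm⟩⟩ := evaln_succ_prec_iff.1 h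
      · exact hK.eval_prec_zero_mem hn hy (ihf _ _ hm)
      · exact hK.eval_prec_succ_mem hn hy (evaln_mem hi) (ihg _ _ hm)
    | rfind' cf ihf =>
      obtain ⟨hn, v, hv, ⟨rfl, rfl⟩ | ⟨hv0, hm⟩⟩ := evaln_succ_rfind'_iff.1 h
      · exact hK.eval_rfind_zero_mem hn (ihf _ _ hv)
      · obtain ⟨v, rfl⟩ := Nat.exists_eq_succ_of_ne_zero hv0
        exact hK.eval_rfind_succ_mem hn (ihf _ _ hv) (evaln_mem hm)

theorem halt_mem {N : ℕ} (hTop : [N] ∈ K 9) (hN : (eval (ofNat Code N) 0).Dom) :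
    [] ∈ K 10 := by
  obtain ⟨m, hm⟩ := Part.dom_iff_mem.1 hN
  obtain ⟨k, hk⟩ := evaln_complete.1 hm
  have hE := hK.evaln_mem hk
  rw [encode_ofNat] at hE
  exact fire hK.sat halt (listValuation [N, 0, k, m]) ⟨hTop, hK.zero, hE⟩

end ArithModel

theorem exists_arithModel_comap {N : ℕ} {J : Instance} (hJ : ∀ t ∈ P₁.post, satTGD J t)
    (h0 : [0] ∈ J 0) (hS : ∀ i < N, [i, i + 1] ∈ J 1) :
    ∃ x : ℕ → ℕ, x N = N ∧ ArithModel (J.comap x) := by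
  have hfull : ∀ t ∈ fullRules, satTGD J t := fun t ht => hJ t (List.mem_cons_of_mem _ ht)
  have hnat : ∀ i ≤ N, [i] ∈ J 2 := fun i hi => by
    induction i with
    | zero => exact fire hfull zeroNat (listValuation [0]) h0
    | succ i _ => exact fire hfull succNat (listValuation [i, i + 1]) (hS i hi)
  have hnext : ∀ a, [a] ∈ J 2 → ∃ b, [a, b] ∈ J 1 ∧ [b] ∈ J 2 := fun a ha => by
    obtain ⟨ν, hν, hhead⟩ :=
      hJ succExists List.mem_cons_self (fun _ => a) (by simpa [succExists])
    have hν0 : ν 0 = a := hν 0 ⟨_, List.mem_singleton_self _, List.mem_singleton_self _⟩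
    simp only [succExists, List.mem_cons, List.not_mem_nil, or_false, forall_eq_or_imp,
      forall_eq, holdsAtom, List.map, hν0] at hhead
    exact ⟨_, hhead⟩
  obtain ⟨x, hxN, hx⟩ := exists_chain_extending hnext id N (hnat N le_rfl) hS
  refine ⟨x, hxN N le_rfl,
    fun t ht => (fullTGD_of_mem_fullRules t ht).satTGD_comap (hfull t ht) x, ?_, hx⟩
  show [x 0] ∈ J 0
  rwa [hxN 0 (Nat.zero_le N)]

theorem applicable_iff_halts (N : ℕ) :
    (∀ J ∈ procOutcomes P₁ (toInstance (input N)), ∀ t ∈ P₂.pre, satTGD J t) ↔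
      (eval (ofNat Code N) 0).Dom := by
  constructor
  · intro happ
    by_contra hN
    have hmem : stdModel N ∈ procOutcomes P₁ (toInstance (input N)) :=
      ⟨by simp [P₁], stdModel_sat_post hN, fun R hR => absurd (Set.mem_univ R) hR,
        fun q _ => answers_mono (input_le_stdModel N) q⟩
    exact satTGD_nullary_iff.1 (happ _ hmem _ List.mem_cons_self)
  · rintro hN J ⟨-, hJ, -, hpres⟩ t ht
    have hinput {R n l} (hq : atomQuery R n ∈ P₁.pres) (hl : (R, l) ∈ input N)
        (hn : l.length = n) : l ∈ J R :=
      (mem_answers_atomQuery.1 (hpres _ hq (mem_answers_atomQuery.2 ⟨hl, hn⟩))).1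
    obtain ⟨x, hxN, hK⟩ := exists_arithModel_comap (N := N) hJ
      (hinput (by simp [P₁]) (by simp [input]) rfl)
      (fun i hi => hinput (by simp [P₁]) (by simp [input, hi]) rfl)
    have hTop : [N] ∈ J.comap x 9 := by
      show [x N] ∈ J 9
      rw [hxN]
      exact hinput (by simp [P₁]) (by simp [input]) rfl
    obtain rfl : t = ⟨[], [⟨10, []⟩]⟩ := by simpa [P₂] using ht
    exact satTGD_nullary_iff.2 (hK.halt_mem hTop hN)

end HaltingReduction

/-- Applicability is undecidable: there are two fixed procedures `P₁`, `P₂`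
with tgd pre- and postconditions such that no algorithm decides, given a finite
instance `I`, whether every instance in `outcomes_{P₁}(I)` satisfies the
precondition tgds of `P₂`. -/
theorem applicability_undecidable :
    ∃ P₁ P₂ : Proc,
      ¬ ComputablePred (fun L : FinInst =>
          ∀ J ∈ procOutcomes P₁ (toInstance L), ∀ t ∈ P₂.pre, satTGD J t) :=
  ⟨HaltingReduction.P₁, HaltingReduction.P₂, fun h => ComputablePred.halting_problem 0 <|
    ComputablePred.computable_of_manyOneReducible
      ⟨fun c => HaltingReduction.input (Encodable.encode c),
        HaltingReduction.input_primrec.to_comp.comp Computable.encode,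
        fun c => by rw [HaltingReduction.applicable_iff_halts, Denumerable.ofNat_encode]⟩ h⟩
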